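/- Let m ≥ 1 and let G be the complete bipartite graph K_{2,m} with unit edge weights, with bipartition parts {s, t} and M, |M| = m. Then G has at least 2^m distinct relevant cutsets; in particular, the number of relevant cutsets of a graph can grow exponentially in the number of its vertices. -/

import Mathlib

open Finset
open scoped Classical

variable {V : Type*}

/-- The edge boundary `∂S`: the set of edges of `G` with exactly one endpoint in `S`. -/
noncomputable def edgeBoundary [Fintype V] [DecidableEq V] (G : SimpleGraph V) (S : Finset V) :
    Finset (Sym2 V) :=
  Finset.univ.filter fun e => e ∈ G.edgeSet ∧ ∃ u v, e = s(u, v) ∧ u ∈ S ∧ v ∉ S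

/-- A cutset of `G` is an edge boundary `∂S` with `∅ ≠ S ≠ V`. -/
def IsCutset [Fintype V] [DecidableEq V] (G : SimpleGraph V) (D : Finset (Sym2 V)) : Prop :=
  ∃ S : Finset V, S ≠ ∅ ∧ S ≠ Finset.univ ∧ D = edgeBoundary G S

/-- Symmetric difference of a finite family of edge sets: the set of edges occurring in an
odd number of members of the family. -/
noncomputable def symmDiffFamily [Fintype V] [DecidableEq V] {ι : Type*} (s : Finset ι)
    (f : ι → Finset (Sym2 V)) : Finset (Sym2 V) :=
  Finset.univ.filter fun e => Odd ((s.filter fun i => e ∈ f i).card)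

/-- A cut basis: a family of `n - 1` cutsets such that every element of the cut space is the
symmetric difference of a subfamily, and no nonempty subfamily has empty symmetric
difference. -/
def IsCutBasis [Fintype V] [DecidableEq V] (G : SimpleGraph V)
    (𝒟 : Finset (Finset (Sym2 V))) : Prop :=
  𝒟.card = Fintype.card V - 1 ∧
  (∀ D ∈ 𝒟, IsCutset G D) ∧
  (∀ S : Finset V, ∃ ℬ ⊆ 𝒟, edgeBoundary G S = symmDiffFamily ℬ id) ∧
  (∀ ℬ ⊆ 𝒟, ℬ.Nonempty → symmDiffFamily ℬ id ≠ ∅)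

/-- The weight `|D|` of an edge set `D`. -/
def weight (w : Sym2 V → ℝ) (D : Finset (Sym2 V)) : ℝ :=
  ∑ e ∈ D, w e

/-- A minimum cut basis: a cut basis of minimum total weight. -/
def IsMinCutBasis [Fintype V] [DecidableEq V] (G : SimpleGraph V) (w : Sym2 V → ℝ)
    (𝒟 : Finset (Finset (Sym2 V))) : Prop :=
  IsCutBasis G 𝒟 ∧
  ∀ 𝒟' : Finset (Finset (Sym2 V)), IsCutBasis G 𝒟' →
    ∑ D ∈ 𝒟, weight w D ≤ ∑ D ∈ 𝒟', weight w D

/-- A cutset is relevant if it belongs to at least one minimum cut basis. -/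
def IsRelevant [Fintype V] [DecidableEq V] (G : SimpleGraph V) (w : Sym2 V → ℝ)
    (D : Finset (Sym2 V)) : Prop :=
  ∃ 𝒟 : Finset (Finset (Sym2 V)), IsMinCutBasis G w 𝒟 ∧ D ∈ 𝒟

/-- A `u,v`-cut: a cutset of the form `∂S` with `u ∈ S` and `v ∉ S`. -/
def IsUVCut [Fintype V] [DecidableEq V] (G : SimpleGraph V) (u v : V)
    (D : Finset (Sym2 V)) : Prop :=
  ∃ S : Finset V, u ∈ S ∧ v ∉ S ∧ D = edgeBoundary G S

/-- A minimum-weight `u,v`-cut. -/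
def IsMinUVCut [Fintype V] [DecidableEq V] (G : SimpleGraph V) (w : Sym2 V → ℝ) (u v : V)
    (D : Finset (Sym2 V)) : Prop :=
  IsUVCut G u v D ∧ ∀ D' : Finset (Sym2 V), IsUVCut G u v D' → weight w D ≤ weight w D'

/-- A minimum `u,v`-cut with respect to unit weights (cardinality). -/
def IsMinUVCutCard [Fintype V] [DecidableEq V] (G : SimpleGraph V) (u v : V)
    (D : Finset (Sym2 V)) : Prop :=
  IsUVCut G u v D ∧ ∀ D' : Finset (Sym2 V), IsUVCut G u v D' → D.card ≤ D'.card

/-!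
For `A ⊆ M` the cut `D_A = ∂({s} ∪ A)` has exactly one edge at each `j ∈ M`, so `|D_A| = m`, and
the `2 ^ m` cuts `D_A` are distinct. Together with the `m` stars `∂{j}` (two edges each) `D_A`
forms a cut basis of weight `3m`: for `A = ∅` this is the basis of vertex stars of the connected
graph rooted at `t`, and the elementary exchange `D_A ↦ D_A ∆ ∂{j} = D_{A ∆ {j}}` preserves cut
bases. No cut basis is lighter: `∂{s}` separates `s` from `t`, so by parity along a path `s j t`
some basis member separates them too, and such a cut has `m` edges, while every cutset has at
least `min m 2` edges. For `m = 1` the lighter basis `{D_A, D_{A ∆ {j}}}` of weight `2` is used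
instead.
-/

open scoped symmDiff

theorem Finset.card_symmDiff_add_card_inter {α : Type*} [DecidableEq α] (s t : Finset α) :
    #(s ∆ t) + #(s ∩ t) = #(s ∪ t) := by
  rw [symmDiff_eq_sup_sdiff_inf]
  exact card_sdiff_add_card_eq_card inter_subset_union

theorem Finset.odd_card_symmDiff {α : Type*} [DecidableEq α] (s t : Finset α) :
    Odd #(s ∆ t) ↔ ¬(Odd #s ↔ Odd #t) := by
  have h₁ := card_symmDiff_add_card_inter s t
  have h₂ := card_union_add_card_inter s t
  simp only [Nat.odd_iff]
  omega

section EdgeBoundary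

variable [Fintype V] [DecidableEq V] {G : SimpleGraph V}

theorem mk_mem_edgeBoundary {S : Finset V} {u v : V} :
    s(u, v) ∈ edgeBoundary G S ↔ G.Adj u v ∧ (u ∈ S ↔ v ∉ S) := by
  simp only [edgeBoundary, mem_filter, mem_univ, true_and, SimpleGraph.mem_edgeSet]
  constructor
  · rintro ⟨h, a, b, hab, ha, hb⟩
    rcases Sym2.eq_iff.mp hab with ⟨rfl, rfl⟩ | ⟨rfl, rfl⟩ <;> tauto
  · rintro ⟨h, huv⟩
    refine ⟨h, ?_⟩
    by_cases hu : u ∈ S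
    · exact ⟨u, v, rfl, hu, huv.mp hu⟩
    · exact ⟨v, u, Sym2.eq_swap, by tauto, hu⟩

theorem edgeBoundary_symmDiff (S T : Finset V) :
    edgeBoundary G (S ∆ T) = edgeBoundary G S ∆ edgeBoundary G T := by
  ext e
  induction e using Sym2.ind with
  | _ u v =>
    simp only [Finset.mem_symmDiff, mk_mem_edgeBoundary]
    tauto

theorem edgeBoundary_compl (S : Finset V) : edgeBoundary G Sᶜ = edgeBoundary G S := by
  ext e
  induction e using Sym2.ind with
  | _ u v =>
    simp only [mk_mem_edgeBoundary, mem_compl]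
    tauto

@[simp]
theorem edgeBoundary_empty : edgeBoundary G ∅ = ∅ := by
  ext e
  induction e using Sym2.ind with
  | _ u v => simp [mk_mem_edgeBoundary]

theorem edgeBoundary_insert {v : V} {S : Finset V} (hv : v ∉ S) :
    edgeBoundary G (insert v S) = edgeBoundary G {v} ∆ edgeBoundary G S := by
  rw [← edgeBoundary_symmDiff, symmDiff_eq_union (disjoint_singleton_left.mpr hv), insert_eq]

theorem edgeBoundary_nonempty (hG : G.Connected) {S : Finset V} (hS : S.Nonempty)
    (hS' : S ≠ univ) : (edgeBoundary G S).Nonempty := by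
  obtain ⟨u, hu⟩ := hS
  obtain ⟨v, -, hv⟩ := exists_of_ssubset (ssubset_univ_iff.mpr hS')
  obtain ⟨d, -, hd, hd'⟩ := (hG u v).some.exists_boundary_dart (S : Set V) hu hv
  exact ⟨s(d.fst, d.snd), mk_mem_edgeBoundary.mpr ⟨d.adj, iff_of_true hd hd'⟩⟩

theorem IsCutset.symmDiff {D D' : Finset (Sym2 V)} (hD : IsCutset G D) (hD' : IsCutset G D')
    (hne : D ≠ D') : IsCutset G (D ∆ D') := by
  obtain ⟨S, -, -, rfl⟩ := hD
  obtain ⟨T, -, -, rfl⟩ := hD'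
  have hST : edgeBoundary G (S ∆ T) ≠ ∅ := by rwa [edgeBoundary_symmDiff, Ne, symmDiff_eq_empty]
  refine ⟨S ∆ T, fun h => hST ?_, fun h => hST ?_, (edgeBoundary_symmDiff S T).symm⟩
  · rw [h, edgeBoundary_empty]
  · rw [h, ← compl_empty, edgeBoundary_compl, edgeBoundary_empty]

theorem odd_card_edgeBoundary_inter_path {S : Finset V} {u w v : V} (huw : G.Adj u w)
    (hwv : G.Adj w v) (huv : u ≠ v) :
    Odd #(edgeBoundary G S ∩ {s(u, w), s(w, v)}) ↔ (u ∈ S ↔ v ∉ S) := by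
  have hne : s(u, w) ≠ s(w, v) := by simp [huv, huw.ne]
  rw [show edgeBoundary G S ∩ {s(u, w), s(w, v)} =
      ({s(u, w), s(w, v)} : Finset _).filter (· ∈ edgeBoundary G S) by ext; simp [and_comm],
    filter_insert, filter_singleton]
  simp only [mk_mem_edgeBoundary, huw, hwv, true_and]
  by_cases hu : u ∈ S <;> by_cases hw : w ∈ S <;> by_cases hv : v ∈ S <;> simp [hu, hw, hv, hne]

end EdgeBoundary

section SymmDiffFamily

variable [Fintype V] [DecidableEq V] {ι : Type*}

theorem mem_symmDiffFamily {s : Finset ι} {f : ι → Finset (Sym2 V)} {e : Sym2 V} :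
    e ∈ symmDiffFamily s f ↔ Odd #(s.filter fun i => e ∈ f i) := by
  simp [symmDiffFamily]

@[simp]
theorem symmDiffFamily_empty (f : ι → Finset (Sym2 V)) : symmDiffFamily ∅ f = ∅ := by
  ext e
  simp [mem_symmDiffFamily]

@[simp]
theorem symmDiffFamily_singleton (i : ι) (f : ι → Finset (Sym2 V)) :
    symmDiffFamily {i} f = f i := by
  ext e
  by_cases he : e ∈ f i <;> simp [mem_symmDiffFamily, filter_singleton, he]

variable [DecidableEq ι]

theorem symmDiffFamily_symmDiff (s t : Finset ι) (f : ι → Finset (Sym2 V)) :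
    symmDiffFamily (s ∆ t) f = symmDiffFamily s f ∆ symmDiffFamily t f := by
  ext e
  have hfilter : (s ∆ t).filter (fun i => e ∈ f i) =
      s.filter (fun i => e ∈ f i) ∆ t.filter (fun i => e ∈ f i) := by
    ext i
    simp only [mem_filter, Finset.mem_symmDiff]
    tauto
  rw [Finset.mem_symmDiff, mem_symmDiffFamily, mem_symmDiffFamily, mem_symmDiffFamily, hfilter,
    odd_card_symmDiff]
  tauto

theorem symmDiffFamily_insert {i : ι} {s : Finset ι} (hi : i ∉ s)
    (f : ι → Finset (Sym2 V)) :
    symmDiffFamily (insert i s) f = f i ∆ symmDiffFamily s f := by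
  rw [insert_eq, ← symmDiff_eq_union (disjoint_singleton_left.mpr hi), symmDiffFamily_symmDiff,
    symmDiffFamily_singleton]

theorem symmDiffFamily_image {κ : Type*} [DecidableEq κ] {s : Finset κ} {g : κ → ι}
    (hg : Set.InjOn g s) (f : ι → Finset (Sym2 V)) :
    symmDiffFamily (s.image g) f = symmDiffFamily s (f ∘ g) := by
  ext e
  rw [mem_symmDiffFamily, mem_symmDiffFamily, filter_image,
    card_image_of_injOn (hg.mono (filter_subset _ _))]
  rfl

theorem exists_odd_card_inter_of_odd {s : Finset ι} {f : ι → Finset (Sym2 V)}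
    {P : Finset (Sym2 V)} (h : Odd #(symmDiffFamily s f ∩ P)) : ∃ i ∈ s, Odd #(f i ∩ P) := by
  induction s using Finset.induction_on with
  | empty => simp at h
  | insert i s hi ih =>
    have hdistrib : (f i ∆ symmDiffFamily s f) ∩ P = (f i ∩ P) ∆ (symmDiffFamily s f ∩ P) :=
      inf_symmDiff_distrib_right _ _ _
    rw [symmDiffFamily_insert hi, hdistrib, odd_card_symmDiff] at h
    by_cases hi' : Odd #(f i ∩ P)
    · exact ⟨i, mem_insert_self i s, hi'⟩
    · obtain ⟨j, hj, hj'⟩ := ih (by tauto)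
      exact ⟨j, mem_insert_of_mem hj, hj'⟩

theorem symmDiffFamily_triangle {D D' : Finset (Sym2 V)} (hD : D ≠ ∅) (hD' : D' ≠ ∅)
    (hne : D ≠ D') : symmDiffFamily {D, D', D ∆ D'} id = ∅ := by
  have h₁ : D ∉ ({D', D ∆ D'} : Finset _) := by
    have : D ∆ D' ≠ D := by rwa [Ne, symmDiff_eq_left]
    simp [hne, this.symm]
  have h₂ : D' ∉ ({D ∆ D'} : Finset _) := by
    have : D ∆ D' ≠ D' := by rwa [Ne, symmDiff_eq_right]
    simp [this.symm]
  rw [symmDiffFamily_insert h₁, symmDiffFamily_insert h₂, symmDiffFamily_singleton, id, id, id,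
    symmDiff_left_comm D', symmDiff_self, symmDiff_bot, symmDiff_self]
  rfl

end SymmDiffFamily

section CutBasis

variable [Fintype V] [DecidableEq V] {G : SimpleGraph V} {𝒟 : Finset (Finset (Sym2 V))}

theorem IsCutBasis.ne_empty (h : IsCutBasis G 𝒟) {D : Finset (Sym2 V)} (hD : D ∈ 𝒟) : D ≠ ∅ := by
  simpa using h.2.2.2 {D} (singleton_subset_iff.mpr hD) (singleton_nonempty D)

theorem IsCutBasis.exists_odd_card_inter (h : IsCutBasis G 𝒟) {P : Finset (Sym2 V)}
    {S : Finset V} (hS : Odd #(edgeBoundary G S ∩ P)) : ∃ D ∈ 𝒟, Odd #(D ∩ P) := by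
  obtain ⟨ℬ, hℬ, hSℬ⟩ := h.2.2.1 S
  rw [hSℬ] at hS
  obtain ⟨D, hD, hDP⟩ := exists_odd_card_inter_of_odd hS
  exact ⟨D, hℬ hD, hDP⟩

theorem IsCutBasis.symmDiff_notMem (h : IsCutBasis G 𝒟) {D D' : Finset (Sym2 V)} (hD : D ∈ 𝒟)
    (hD' : D' ∈ 𝒟) (hne : D ≠ D') : D ∆ D' ∉ 𝒟 := fun hmem =>
  h.2.2.2 {D, D', D ∆ D'} (by simp [insert_subset_iff, hD, hD', hmem]) (by simp)
    (symmDiffFamily_triangle (h.ne_empty hD) (h.ne_empty hD') hne)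

/-- Replacing `D'` by `D ∆ D'` in a cut basis gives a cut basis: symmetric difference with the
triangle `{D, D', D ∆ D'}`, whose own symmetric difference is empty, translates subfamilies of one
basis into subfamilies of the other. -/
theorem IsCutBasis.exchange (h : IsCutBasis G 𝒟) {D D' : Finset (Sym2 V)} (hD : D ∈ 𝒟)
    (hD' : D' ∈ 𝒟) (hne : D ≠ D') : IsCutBasis G (insert (D ∆ D') (𝒟.erase D')) := by
  set 𝒯 : Finset (Finset (Sym2 V)) := {D, D', D ∆ D'}
  have h𝒯 : symmDiffFamily 𝒯 id = ∅ :=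
    symmDiffFamily_triangle (h.ne_empty hD) (h.ne_empty hD') hne
  have htoggle (ℬ : Finset (Finset (Sym2 V))) :
      symmDiffFamily (ℬ ∆ 𝒯) id = symmDiffFamily ℬ id := by
    rw [symmDiffFamily_symmDiff, h𝒯]
    exact symmDiff_bot _
  have hnew := h.symmDiff_notMem hD hD' hne
  obtain ⟨hcard, hcut, hspan, hindep⟩ := h
  refine ⟨?_, ?_, fun S => ?_, fun ℬ hℬ hℬne => ?_⟩
  · rw [card_insert_of_notMem (fun h' => hnew (mem_of_mem_erase h')), card_erase_of_mem hD',
      hcard]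
    have : 0 < #𝒟 := card_pos.mpr ⟨D, hD⟩
    omega
  · intro X hX
    rcases mem_insert.mp hX with rfl | hX
    · exact (hcut D hD).symmDiff (hcut D' hD') hne
    · exact hcut X (mem_of_mem_erase hX)
  · obtain ⟨ℬ, hℬ, hSℬ⟩ := hspan S
    by_cases hD'ℬ : D' ∈ ℬ
    · exact ⟨ℬ ∆ 𝒯, fun X hX => by grind [Finset.mem_symmDiff], by rw [htoggle, hSℬ]⟩
    · exact ⟨ℬ, fun X hX => mem_insert_of_mem (mem_erase.mpr ⟨fun h' => hD'ℬ (h' ▸ hX), hℬ hX⟩),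
        hSℬ⟩
  · by_cases hnewℬ : D ∆ D' ∈ ℬ
    · exact fun hempty => hindep (ℬ ∆ 𝒯) (fun X hX => by grind [Finset.mem_symmDiff])
        ⟨D', by grind [Finset.mem_symmDiff]⟩ (by rw [htoggle, hempty])
    · refine hindep ℬ (fun X hX => ?_) hℬne
      rcases mem_insert.mp (hℬ hX) with rfl | hX'
      · exact absurd hX hnewℬ
      · exact mem_of_mem_erase hX'

theorem edgeBoundary_eq_symmDiffFamily (S : Finset V) :
    edgeBoundary G S = symmDiffFamily S fun v => edgeBoundary G {v} := by
  induction S using Finset.induction_on with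
  | empty => simp
  | insert v S hv ih => rw [edgeBoundary_insert hv, symmDiffFamily_insert hv, ih]

theorem isCutBasis_image_edgeBoundary_singleton (hG : G.Connected) (r : V) :
    IsCutBasis G ((univ.erase r).image fun v => edgeBoundary G {v}) := by
  have ne_univ {T : Finset V} (hT : r ∉ T) : T ≠ univ := fun h => hT (h ▸ mem_univ r)
  have hinj : Set.InjOn (fun v => edgeBoundary G {v}) (univ.erase r) := by
    intro u hu v hv huv
    by_contra hne
    have hr : r ∉ ({u} ∆ {v} : Finset V) := by
      simp only [Finset.mem_symmDiff, mem_singleton]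
      grind
    have hempty : edgeBoundary G ({u} ∆ {v}) = ∅ := by
      rw [edgeBoundary_symmDiff]
      exact symmDiff_eq_bot.mpr huv
    have hu' : u ∈ ({u} ∆ {v} : Finset V) := by simp [Finset.mem_symmDiff, hne]
    exact (edgeBoundary_nonempty hG ⟨u, hu'⟩ (ne_univ hr)).ne_empty hempty
  have hsub {T : Finset V} (hT : r ∉ T) :
      symmDiffFamily (T.image fun v => edgeBoundary G {v}) id = edgeBoundary G T := by
    rw [symmDiffFamily_image (hinj.mono fun v hv => by grind),
      edgeBoundary_eq_symmDiffFamily]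
    rfl
  refine ⟨?_, ?_, fun S => ?_, fun ℬ hℬ hℬne => ?_⟩
  · rw [card_image_of_injOn hinj, card_erase_of_mem (mem_univ r), card_univ]
  · simp only [mem_image, mem_erase]
    rintro _ ⟨v, ⟨hvr, -⟩, rfl⟩
    exact ⟨{v}, singleton_ne_empty v, ne_univ (by simpa using Ne.symm hvr), rfl⟩
  · wlog hS : r ∉ S generalizing S
    · obtain ⟨ℬ, hℬ, hSℬ⟩ := this Sᶜ (by simpa using hS)
      exact ⟨ℬ, hℬ, by rwa [← edgeBoundary_compl]⟩
    exact ⟨S.image _, image_subset_image fun v hv => by grind, (hsub hS).symm⟩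
  · obtain ⟨T, hT, rfl⟩ := subset_image_iff.mp hℬ
    have hrT : r ∉ T := fun h => by simpa using hT h
    rw [hsub hrT]
    exact (edgeBoundary_nonempty hG (image_nonempty.mp hℬne) (ne_univ hrT)).ne_empty

theorem isMinCutBasis_of_le_sum_card {c : ℕ} (h : IsCutBasis G 𝒟) (h𝒟 : ∑ D ∈ 𝒟, #D ≤ c)
    (hc : ∀ 𝒟', IsCutBasis G 𝒟' → c ≤ ∑ D ∈ 𝒟', #D) : IsMinCutBasis G (fun _ => 1) 𝒟 := by
  refine ⟨h, fun 𝒟' h' => ?_⟩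
  simp only [weight, sum_const, nsmul_eq_mul, mul_one]
  exact_mod_cast h𝒟.trans (hc 𝒟' h')

end CutBasis

section CompleteBipartite

variable {α β : Type*}

theorem completeBipartiteGraph_connected [Nonempty α] [Nonempty β] :
    (completeBipartiteGraph α β).Connected := by
  obtain ⟨a⟩ := ‹Nonempty α›
  obtain ⟨b⟩ := ‹Nonempty β›
  have hreach : ∀ x, (completeBipartiteGraph α β).Reachable (Sum.inl a) x := by
    rintro (a' | b')
    · exact (SimpleGraph.Adj.reachable (v := Sum.inr b) (by simp)).trans
        (SimpleGraph.Adj.reachable (by simp))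
    · exact SimpleGraph.Adj.reachable (by simp)
  exact ⟨fun x y => (hreach x).symm.trans (hreach y)⟩

variable [Fintype α] [Fintype β] [DecidableEq α] [DecidableEq β]

theorem edgeBoundary_completeBipartiteGraph (S : Finset (α ⊕ β)) :
    edgeBoundary (completeBipartiteGraph α β) S =
      (univ.filter fun p : α × β => (Sum.inl p.1 ∈ S ↔ Sum.inr p.2 ∉ S)).image
        fun p => s(Sum.inl p.1, Sum.inr p.2) := by
  ext e
  induction e using Sym2.ind with
  | _ u v =>
    rcases u with a | b <;> rcases v with a' | b' <;> simp [mk_mem_edgeBoundary]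
    tauto

theorem card_edgeBoundary_completeBipartiteGraph (S : Finset (α ⊕ β)) :
    #(edgeBoundary (completeBipartiteGraph α β) S) =
      #(univ.filter fun p : α × β => (Sum.inl p.1 ∈ S ↔ Sum.inr p.2 ∉ S)) := by
  rw [edgeBoundary_completeBipartiteGraph, card_image_of_injective]
  rintro ⟨a, b⟩ ⟨a', b'⟩ h
  simpa using h

end CompleteBipartite

abbrev K2 (m : ℕ) : SimpleGraph (Fin 2 ⊕ Fin m) := completeBipartiteGraph (Fin 2) (Fin m)

namespace K2

variable {m : ℕ}

open Sum

theorem card_edgeBoundary_of_separates {S : Finset (Fin 2 ⊕ Fin m)}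
    (hS : inl 0 ∈ S ↔ inl 1 ∉ S) : #(edgeBoundary (K2 m) S) = m := by
  rw [card_edgeBoundary_completeBipartiteGraph, card_filter, Fintype.sum_prod_type_right]
  simp only [Fin.sum_univ_two]
  trans ∑ _ : Fin m, 1
  · refine sum_congr rfl fun j _ => ?_
    by_cases h0 : inl 0 ∈ S <;> by_cases hj : inr j ∈ S <;> simp [h0, hj] at hS ⊢ <;> simp [hS]
  · simp

theorem two_le_card_edgeBoundary {S : Finset (Fin 2 ⊕ Fin m)} (hS : S ≠ ∅) (hS' : S ≠ univ)
    (hst : inl 0 ∈ S ↔ inl 1 ∈ S) : 2 ≤ #(edgeBoundary (K2 m) S) := by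
  obtain ⟨j, hj⟩ : ∃ j, (inl 0 ∈ S ↔ inr j ∉ S) := by
    by_contra! hall
    have hx : ∀ x, x ∈ S ↔ inl 0 ∈ S := by
      rintro (i | j)
      · fin_cases i <;> simp [hst]
      · have := hall j
        tauto
    by_cases h0 : inl 0 ∈ S
    · exact hS' (eq_univ_iff_forall.mpr fun x => (hx x).mpr h0)
    · exact hS (eq_empty_iff_forall_notMem.mpr fun x hx' => h0 ((hx x).mp hx'))
  calc 2 = #({s(inl 0, inr j), s(inl 1, inr j)} : Finset (Sym2 (Fin 2 ⊕ Fin m))) :=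
        (card_pair (by simp)).symm
    _ ≤ _ := card_le_card fun e he => by
      simp only [mem_insert, mem_singleton] at he
      rcases he with rfl | rfl <;> simp [mk_mem_edgeBoundary] <;> tauto

theorem min_le_card_of_isCutset {D : Finset (Sym2 (Fin 2 ⊕ Fin m))} (hD : IsCutset (K2 m) D) :
    min m 2 ≤ #D := by
  obtain ⟨S, hS, hS', rfl⟩ := hD
  by_cases hst : inl 0 ∈ S ↔ inl 1 ∈ S
  · exact (min_le_right _ _).trans (two_le_card_edgeBoundary hS hS' hst)
  · exact (min_le_left _ _).trans (card_edgeBoundary_of_separates (by tauto)).ge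

theorem le_sum_card_of_isCutBasis (hm : 1 ≤ m) {𝒟 : Finset (Finset (Sym2 (Fin 2 ⊕ Fin m)))}
    (h : IsCutBasis (K2 m) 𝒟) : m + m * min m 2 ≤ ∑ D ∈ 𝒟, #D := by
  have hpath (S : Finset (Fin 2 ⊕ Fin m)) :=
    odd_card_edgeBoundary_inter_path (G := K2 m) (S := S) (u := inl 0) (w := inr ⟨0, hm⟩)
      (v := inl 1) (by simp) (by simp) (by simp)
  obtain ⟨D₁, hD₁, hodd⟩ := h.exists_odd_card_inter ((hpath {inl 0}).mpr (by simp))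
  have hcard₁ : #D₁ = m := by
    obtain ⟨S₁, -, -, rfl⟩ := h.2.1 D₁ hD₁
    exact card_edgeBoundary_of_separates ((hpath S₁).mp hodd)
  have hcard : #(𝒟.erase D₁) = m := by
    rw [card_erase_of_mem hD₁, h.1]
    simp
  have hrest := card_nsmul_le_sum (𝒟.erase D₁) card (min m 2)
    fun D hD => min_le_card_of_isCutset (h.2.1 D (mem_of_mem_erase hD))
  rw [hcard, smul_eq_mul] at hrest
  calc m + m * min m 2 ≤ #D₁ + ∑ D ∈ 𝒟.erase D₁, #D := by
        rw [hcard₁]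
        gcongr
    _ = ∑ D ∈ 𝒟, #D := add_sum_erase _ _ hD₁

/-- The cut `∂({s} ∪ A)`, where `s = inl 0` and `t = inl 1`. -/
noncomputable def stCut (A : Finset (Fin m)) : Finset (Sym2 (Fin 2 ⊕ Fin m)) :=
  edgeBoundary (K2 m) (insert (inl 0) (A.image inr))

theorem mk_inl_zero_mem_stCut {A : Finset (Fin m)} {j : Fin m} :
    s(inl 0, inr j) ∈ stCut A ↔ j ∉ A := by
  simp [stCut, mk_mem_edgeBoundary]

theorem mk_inl_one_mem_stCut {A : Finset (Fin m)} {j : Fin m} :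
    s(inl 1, inr j) ∈ stCut A ↔ j ∈ A := by
  simp [stCut, mk_mem_edgeBoundary]

theorem mk_inl_mem_edgeBoundary_singleton {i : Fin 2} {j j' : Fin m} :
    s(inl i, inr j') ∈ edgeBoundary (K2 m) {inr j} ↔ j' = j := by
  simp [mk_mem_edgeBoundary, eq_comm]

theorem edgeBoundary_singleton_inr_injective :
    Function.Injective fun j : Fin m => edgeBoundary (K2 m) {inr j} := by
  intro j j' h
  dsimp only at h
  have : s(inl 0, inr j) ∈ edgeBoundary (K2 m) {inr j'} :=
    h ▸ mk_inl_mem_edgeBoundary_singleton.mpr rfl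
  exact mk_inl_mem_edgeBoundary_singleton.mp this

theorem stCut_injective : Function.Injective (stCut (m := m)) := by
  intro A B h
  ext j
  rw [← mk_inl_one_mem_stCut, h, mk_inl_one_mem_stCut]

theorem edgeBoundary_singleton_inr_ne_stCut {A : Finset (Fin m)} {j : Fin m} :
    edgeBoundary (K2 m) {inr j} ≠ stCut A := by
  intro h
  have h₀ := (mk_inl_mem_edgeBoundary_singleton (i := 0) (j' := j)).mpr rfl
  have h₁ := (mk_inl_mem_edgeBoundary_singleton (i := 1) (j' := j)).mpr rfl
  rw [h, mk_inl_zero_mem_stCut] at h₀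
  rw [h, mk_inl_one_mem_stCut] at h₁
  exact h₀ h₁

theorem card_stCut (A : Finset (Fin m)) : #(stCut A) = m :=
  card_edgeBoundary_of_separates (by simp)

theorem card_edgeBoundary_singleton_inr (j : Fin m) : #(edgeBoundary (K2 m) {inr j}) = 2 := by
  rw [card_edgeBoundary_completeBipartiteGraph]
  trans #((univ : Finset (Fin 2)) ×ˢ {j})
  · congr 1
    ext ⟨i, j'⟩
    simp [eq_comm]
  · simp

theorem stCut_symmDiff_edgeBoundary_singleton (A : Finset (Fin m)) (j : Fin m) :
    stCut A ∆ edgeBoundary (K2 m) {inr j} = stCut (A ∆ {j}) := by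
  rw [stCut, stCut, ← edgeBoundary_symmDiff]
  congr 1
  ext (i | j') <;> simp [Finset.mem_symmDiff]

noncomputable def stBasis (A : Finset (Fin m)) : Finset (Finset (Sym2 (Fin 2 ⊕ Fin m))) :=
  insert (stCut A) (univ.image fun j => edgeBoundary (K2 m) {inr j})

theorem stCut_notMem_image {A : Finset (Fin m)} :
    stCut A ∉ univ.image fun j => edgeBoundary (K2 m) {inr j} := by
  simp only [mem_image, mem_univ, true_and, not_exists]
  exact fun j => edgeBoundary_singleton_inr_ne_stCut

theorem stBasis_empty : stBasis (∅ : Finset (Fin m)) =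
    (univ.erase (inl 1)).image fun v => edgeBoundary (K2 m) {v} := by
  ext D
  simp only [stBasis, stCut, image_empty, insert_empty, mem_insert, mem_image, mem_univ,
    true_and, mem_erase]
  constructor
  · rintro (rfl | ⟨j, rfl⟩)
    · exact ⟨inl 0, by simp, rfl⟩
    · exact ⟨inr j, by simp, rfl⟩
  · rintro ⟨(i | j), hv, rfl⟩
    · fin_cases i
      · exact Or.inl rfl
      · simp at hv
    · exact Or.inr ⟨j, rfl⟩

theorem isCutBasis_stBasis (hm : 1 ≤ m) (A : Finset (Fin m)) : IsCutBasis (K2 m) (stBasis A) := by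
  induction A using Finset.induction_on with
  | empty =>
    have : Nonempty (Fin m) := ⟨⟨0, hm⟩⟩
    rw [stBasis_empty]
    exact isCutBasis_image_edgeBoundary_singleton completeBipartiteGraph_connected _
  | insert j A hj ih =>
    have h := ih.exchange (mem_insert_of_mem (mem_image_of_mem _ (mem_univ j)))
      (mem_insert_self _ _) edgeBoundary_singleton_inr_ne_stCut
    rwa [stBasis, erase_insert stCut_notMem_image, symmDiff_comm,
      stCut_symmDiff_edgeBoundary_singleton, symmDiff_eq_union (disjoint_singleton_right.mpr hj),
      union_comm, ← insert_eq] at h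

theorem sum_card_stBasis (A : Finset (Fin m)) : ∑ D ∈ stBasis A, #D = m + m * 2 := by
  rw [stBasis, sum_insert stCut_notMem_image,
    sum_image fun j _ j' _ h => edgeBoundary_singleton_inr_injective h, card_stCut]
  simp [card_edgeBoundary_singleton_inr]

theorem isRelevant_stCut (hm : 1 ≤ m) (A : Finset (Fin m)) :
    IsRelevant (K2 m) (fun _ => 1) (stCut A) := by
  obtain rfl | hm := hm.eq_or_lt
  · have hB := isCutBasis_stBasis le_rfl A
    have hstar : edgeBoundary (K2 1) {inr 0} ∈ stBasis A :=
      mem_insert_of_mem (mem_image_of_mem _ (mem_univ 0))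
    have hne : stCut A ≠ edgeBoundary (K2 1) {inr 0} := edgeBoundary_singleton_inr_ne_stCut.symm
    refine ⟨_, isMinCutBasis_of_le_sum_card (hB.exchange (mem_insert_self _ _) hstar hne) ?_
      (fun _ => le_sum_card_of_isCutBasis le_rfl),
      mem_insert_of_mem (mem_erase.mpr ⟨hne, mem_insert_self _ _⟩)⟩
    have hsum := sum_erase_add _ card hstar
    rw [sum_card_stBasis, card_edgeBoundary_singleton_inr] at hsum
    have hnew := hB.symmDiff_notMem (mem_insert_self _ _) hstar hne
    rw [sum_insert fun h => hnew (mem_of_mem_erase h), stCut_symmDiff_edgeBoundary_singleton,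
      card_stCut]
    omega
  · exact ⟨stBasis A, isMinCutBasis_of_le_sum_card (isCutBasis_stBasis hm.le A)
      (by rw [sum_card_stBasis, min_eq_right hm]) (fun _ => le_sum_card_of_isCutBasis hm.le),
      mem_insert_self _ _⟩

end K2

/-- `K_{2,m}` (`m ≥ 1`) with unit edge weights has at least `2 ^ m` distinct
relevant cutsets; in particular the number of relevant cutsets can grow exponentially in the
number of vertices. -/
theorem K2m_relevant_count (m : ℕ) (hm : 1 ≤ m) :
    2 ^ m ≤
      (Finset.univ.filter fun D : Finset (Sym2 (Fin 2 ⊕ Fin m)) =>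
        IsRelevant (completeBipartiteGraph (Fin 2) (Fin m)) (fun _ => (1 : ℝ)) D).card := by
  calc 2 ^ m = #(univ.image (K2.stCut (m := m))) := by
        rw [card_image_of_injective _ K2.stCut_injective, card_univ, Fintype.card_finset,
          Fintype.card_fin]
    _ ≤ _ := card_le_card fun D hD => by
      obtain ⟨A, -, rfl⟩ := mem_image.mp hD
      exact mem_filter.mpr ⟨mem_univ _, K2.isRelevant_stCut hm A⟩
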